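/- Let n ≥ 1 and let ρ be a probability measure on {c : Fin n → ℕ, ∑ c = d} for a fixed d ≥ 2, satisfying hypotheses (i) and (ii) of the multinomial characterization lemma (Lemma 4.3). Define, for j ∈ A(ρ) and c with ∑ c = d - 1 supported on A(ρ), P(j | c) = ((c_j + 1) · ρ(c + e_j)) / (∑_{k ∈ A(ρ)} (c_k + 1) · ρ(c + e_k)). Then P(j | c) = P(j | c - e_l + e_m) for all l, m ∈ A(ρ) with c_l ≥ 1, m ≠ j, m ≠ l; consequently P(j | c) does not depend on c. -/

import Mathlib

open Finset
open scoped Classical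
/-!
Write `c = z + e_l` with `∑ z = d - 2`. Detailed balance at `z + e_a + e_b` says exactly that the
weights `s_ab = (z_a + 1)(z_b + 1 + δ_ab) ρ(z + e_a + e_b)` satisfy `s_ab² = s_aa s_bb`, so
`s_ab = r_a r_b` with `r_a = √s_aa`. Since `(z_l + 1)(c_k + 1) ρ(c + e_k) = s_lk`, the conditional
probability `P(j | z + e_l) = r_j / ∑_k r_k` does not depend on `l`. Any two tuples of the same
total mass supported on `A` are joined by such moves of a single unit.
-/

noncomputable section

open Function

variable {ι : Type*} [DecidableEq ι]

lemma fun_add_ite_eq_add_single (c : ι → ℕ) (j : ι) :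
    (fun i => c i + if i = j then 1 else 0) = c + Pi.single j 1 := by
  ext i
  simp [Pi.single_apply]

lemma fun_sub_ite_add_ite_eq (c : ι → ℕ) (l m : ι) :
    (fun i => c i - (if i = l then 1 else 0) + (if i = m then 1 else 0)) =
      c - Pi.single l 1 + Pi.single m 1 := by
  ext i
  simp [Pi.single_apply]

lemma sub_single_add_single {c : ι → ℕ} {l : ι} (hl : 1 ≤ c l) :
    c - Pi.single l 1 + Pi.single l 1 = c := by
  ext i
  by_cases h : i = l
  · subst h
    simp only [Pi.add_apply, Pi.sub_apply, Pi.single_eq_same]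
    omega
  · simp [h]

variable (ρ : (ι → ℕ) → ℝ)

def condWeight (c : ι → ℕ) (k : ι) : ℝ :=
  ((c k : ℝ) + 1) * ρ (c + Pi.single k 1)

/-- This is `ρ(c) ∏ c_i! / ∏ z_i!` at `c = z + e_a + e_b`, proportional to `p_a p_b` when `ρ` is
multinomial with parameters `p`. -/
def pairWeight (z : ι → ℕ) (a b : ι) : ℝ :=
  ((z a : ℝ) + 1) * condWeight ρ (z + Pi.single a 1) b

variable {ρ}

lemma pairWeight_pos {z : ι → ℕ} {a b : ι} (h : 0 < ρ (z + Pi.single a 1 + Pi.single b 1)) :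
    0 < pairWeight ρ z a b := by
  unfold pairWeight condWeight
  positivity

variable [Fintype ι]

lemma sum_add_single (c : ι → ℕ) (a : ι) :
    ∑ i, (c + Pi.single a 1 : ι → ℕ) i = ∑ i, c i + 1 := by
  simp [Finset.sum_add_distrib]

def tuplesOn (A : Set ι) (d : ℕ) : Set (ι → ℕ) :=
  {c | ∑ i, c i = d ∧ support c ⊆ A}

lemma add_single_mem_tuplesOn {A : Set ι} {d : ℕ} {c : ι → ℕ} {a : ι} (hc : c ∈ tuplesOn A d)
    (ha : a ∈ A) : c + Pi.single a 1 ∈ tuplesOn A (d + 1) := by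
  refine ⟨by rw [sum_add_single, hc.1], (support_add _ _).trans (Set.union_subset hc.2 ?_)⟩
  exact Pi.support_single_subset.trans (Set.singleton_subset_iff.2 ha)

lemma sub_single_mem_tuplesOn {A : Set ι} {d : ℕ} {c : ι → ℕ} {l : ι}
    (hc : c ∈ tuplesOn A (d + 1)) (hl : 1 ≤ c l) : c - Pi.single l 1 ∈ tuplesOn A d := by
  refine ⟨?_, fun i hi => hc.2 fun hci => hi (by simp [hci])⟩
  have := sum_add_single (c - Pi.single l 1) l
  rw [sub_single_add_single hl, hc.1] at this
  omega

lemma exists_eq_add_single_of_mem_tuplesOn {A : Set ι} {d : ℕ} {c : ι → ℕ}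
    (hc : c ∈ tuplesOn A (d + 1)) : ∃ z ∈ tuplesOn A d, ∃ a ∈ A, c = z + Pi.single a 1 := by
  obtain ⟨a, -, ha⟩ := Finset.exists_ne_zero_of_sum_ne_zero (hc.1.trans_ne d.succ_ne_zero)
  have hca : 1 ≤ c a := Nat.one_le_iff_ne_zero.2 ha
  exact ⟨_, sub_single_mem_tuplesOn hc hca, a, hc.2 ha, (sub_single_add_single hca).symm⟩

theorem apply_eq_of_add_single_eq {β : Type*} {A : Set ι} {d : ℕ} (f : (ι → ℕ) → β)
    (hf : ∀ z ∈ tuplesOn A d, ∀ a ∈ A, ∀ b ∈ A, f (z + Pi.single a 1) = f (z + Pi.single b 1))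
    {c c' : ι → ℕ} (hc : c ∈ tuplesOn A (d + 1)) (hc' : c' ∈ tuplesOn A (d + 1)) :
    f c = f c' := by
  induction d generalizing f c c' with
  | zero =>
    obtain ⟨z, hz, a, ha, rfl⟩ := exists_eq_add_single_of_mem_tuplesOn hc
    obtain ⟨z', hz', b, hb, rfl⟩ := exists_eq_add_single_of_mem_tuplesOn hc'
    have hz0 : ∀ y ∈ tuplesOn A 0, y = 0 := fun y hy =>
      funext fun i => (Finset.sum_eq_zero_iff.1 hy.1) i (Finset.mem_univ i)
    rw [hz0 z hz, hz0 z' hz'] at *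
    exact hf 0 hz a ha b hb
  | succ d ih =>
    obtain ⟨z, hz, a, ha, rfl⟩ := exists_eq_add_single_of_mem_tuplesOn hc
    obtain ⟨z', hz', b, hb, rfl⟩ := exists_eq_add_single_of_mem_tuplesOn hc'
    have hshift : ∀ y ∈ tuplesOn A d, ∀ a' ∈ A, ∀ b' ∈ A,
        f (y + Pi.single a' 1 + Pi.single b 1) = f (y + Pi.single b' 1 + Pi.single b 1) := by
      intro y hy a' ha' b' hb'
      rw [add_right_comm y (Pi.single a' 1), add_right_comm y (Pi.single b' 1)]
      exact hf _ (add_single_mem_tuplesOn hy hb) a' ha' b' hb'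
    rw [hf z hz a ha b hb]
    exact ih (fun y => f (y + Pi.single b 1)) hshift hz hz'

variable (ρ) in
def DetailedBalance (d : ℕ) : Prop :=
  ∀ c : ι → ℕ, ∑ i, c i = d → 0 < ρ c → ∀ j k : ι, 0 < c j → 0 < c k →
    (((c j : ℝ) + (if j = k then 1 else 0)) / ((c j : ℝ) + 1)) *
      (ρ c / ρ (c - Pi.single j 1 + Pi.single k 1))
    = (((c k : ℝ) + 1) / ((c k : ℝ) + (if j = k then 1 else 0))) *
      (ρ (c - Pi.single k 1 + Pi.single j 1) / ρ c)

variable (ρ) in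
def condProb (A : Set ι) (j : ι) (c : ι → ℕ) : ℝ :=
  condWeight ρ c j / ∑ k ∈ Finset.univ.filter (fun k => k ∈ A), condWeight ρ c k

lemma pairWeight_sq {d : ℕ} (hbal : DetailedBalance ρ d) {z : ι → ℕ} (hz : ∑ i, z i + 2 = d)
    {a b : ι} (hab : 0 < ρ (z + Pi.single a 1 + Pi.single b 1))
    (hbb : 0 < ρ (z + Pi.single b 1 + Pi.single b 1)) :
    pairWeight ρ z a b ^ 2 = pairWeight ρ z a a * pairWeight ρ z b b := by
  by_cases h : a = b
  · subst h
    ring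
  have hsum : ∑ i, (z + Pi.single a 1 + Pi.single b 1 : ι → ℕ) i = d := by
    rw [sum_add_single, sum_add_single]
    omega
  have key := hbal _ hsum hab a b (by simp) (by simp [h])
  have hb : z + Pi.single a 1 + Pi.single b 1 - Pi.single a 1 + Pi.single b 1 =
      z + Pi.single b 1 + Pi.single b 1 := by rw [add_right_comm z, add_tsub_cancel_right]
  have ha : z + Pi.single a 1 + Pi.single b 1 - Pi.single b 1 + Pi.single a 1 =
      z + Pi.single a 1 + Pi.single a 1 := by rw [add_tsub_cancel_right]
  rw [ha, hb] at key
  simp only [Pi.add_apply, Pi.single_apply, if_neg h, if_neg (Ne.symm h)] at key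
  simp only [pairWeight, condWeight, Pi.add_apply, Pi.single_apply, if_neg (Ne.symm h)]
  push_cast at key ⊢
  field_simp [hab.ne', hbb.ne'] at key
  linear_combination ((z a : ℝ) + 1) * ((z b : ℝ) + 1) * key

lemma pairWeight_eq_sqrt_mul_sqrt {A : Set ι} {k : ℕ} (hbal : DetailedBalance ρ (k + 2))
    (hpos : ∀ c ∈ tuplesOn A (k + 2), 0 < ρ c) {z : ι → ℕ} (hz : z ∈ tuplesOn A k)
    {a b : ι} (ha : a ∈ A) (hb : b ∈ A) :
    pairWeight ρ z a b = √(pairWeight ρ z a a) * √(pairWeight ρ z b b) := by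
  have hpos₂ : ∀ a' ∈ A, ∀ b' ∈ A, 0 < ρ (z + Pi.single a' 1 + Pi.single b' 1) :=
    fun a' ha' b' hb' => hpos _ (add_single_mem_tuplesOn (add_single_mem_tuplesOn hz ha') hb')
  rw [← Real.sqrt_mul (pairWeight_pos (hpos₂ a ha a ha)).le,
    ← pairWeight_sq hbal (by rw [hz.1]) (hpos₂ a ha b hb) (hpos₂ b hb b hb),
    Real.sqrt_sq (pairWeight_pos (hpos₂ a ha b hb)).le]

theorem condProb_add_single {A : Set ι} {k : ℕ} (hbal : DetailedBalance ρ (k + 2))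
    (hpos : ∀ c ∈ tuplesOn A (k + 2), 0 < ρ c) {z : ι → ℕ} (hz : z ∈ tuplesOn A k)
    {j l : ι} (hj : j ∈ A) (hl : l ∈ A) :
    condProb ρ A j (z + Pi.single l 1) =
      √(pairWeight ρ z j j) / ∑ i ∈ Finset.univ.filter (fun i => i ∈ A), √(pairWeight ρ z i i) := by
  have hfactor : ∀ i ∈ A, ((z l : ℝ) + 1) * condWeight ρ (z + Pi.single l 1) i =
      √(pairWeight ρ z l l) * √(pairWeight ρ z i i) :=
    fun i hi => pairWeight_eq_sqrt_mul_sqrt hbal hpos hz hl hi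
  have hll : √(pairWeight ρ z l l) ≠ 0 := (Real.sqrt_pos.2 (pairWeight_pos
    (hpos _ (add_single_mem_tuplesOn (add_single_mem_tuplesOn hz hl) hl)))).ne'
  rw [condProb, ← mul_div_mul_left _ _ (by positivity : (z l : ℝ) + 1 ≠ 0), Finset.mul_sum,
    hfactor j hj, Finset.sum_congr rfl fun i hi => hfactor i (Finset.mem_filter.1 hi).2,
    ← Finset.mul_sum, mul_div_mul_left _ _ hll]

end

theorem conditional_probability_independent_general
    (n d : ℕ) (hd : 2 ≤ d)
    (ρ : (Fin n → ℕ) → ℝ)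
    (A : Set (Fin n))
    -- hypothesis (i) of Lemma 4.3
    (hpos : ∀ c : Fin n → ℕ, ∑ i, c i = d → (∀ j, j ∉ A → c j = 0) → 0 < ρ c)
    -- hypothesis (ii) of Lemma 4.3: detailed balance (equation (25))
    (hbal : ∀ c : Fin n → ℕ, ∑ i, c i = d → 0 < ρ c → ∀ j k : Fin n,
      0 < c j → 0 < c k →
      (((c j : ℝ) + (if j = k then 1 else 0)) / ((c j : ℝ) + 1)) *
        (ρ c / ρ (fun i => c i - (if i = j then 1 else 0) + (if i = k then 1 else 0)))
      = (((c k : ℝ) + 1) / ((c k : ℝ) + (if j = k then 1 else 0))) *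
        (ρ (fun i => c i - (if i = k then 1 else 0) + (if i = j then 1 else 0)) / ρ c))
    -- the conditional probability P(j | c)
    (P : Fin n → (Fin n → ℕ) → ℝ)
    (hP : ∀ (j : Fin n) (c : Fin n → ℕ), P j c =
      (((c j : ℝ) + 1) * ρ (fun i => c i + if i = j then 1 else 0)) /
        ∑ k ∈ Finset.univ.filter (fun k => k ∈ A),
          (((c k : ℝ) + 1) * ρ (fun i => c i + if i = k then 1 else 0))) :
    (∀ j ∈ A, ∀ c : Fin n → ℕ, ∑ i, c i = d - 1 → (∀ i, i ∉ A → c i = 0) →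
      ∀ l ∈ A, ∀ m ∈ A, 1 ≤ c l → m ≠ j → m ≠ l →
        P j c = P j (fun i => c i - (if i = l then 1 else 0) + (if i = m then 1 else 0))) ∧
    (∀ j ∈ A, ∀ c c' : Fin n → ℕ,
      ∑ i, c i = d - 1 → (∀ i, i ∉ A → c i = 0) →
      ∑ i, c' i = d - 1 → (∀ i, i ∉ A → c' i = 0) →
        P j c = P j c') := by
  obtain ⟨k, rfl⟩ : ∃ k, d = k + 2 := ⟨d - 2, by omega⟩
  have hbal' : DetailedBalance ρ (k + 2) := by
    intro c hc hρc j l hj hl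
    simpa only [fun_sub_ite_add_ite_eq] using hbal c hc hρc j l hj hl
  have hpos' : ∀ c ∈ tuplesOn A (k + 2), 0 < ρ c :=
    fun c hc => hpos c hc.1 (Function.support_subset_iff'.1 hc.2)
  obtain rfl : P = condProb ρ A := by
    ext j c
    simp only [hP, condProb, condWeight, fun_add_ite_eq_add_single]
  have hmove : ∀ j ∈ A, ∀ z ∈ tuplesOn A k, ∀ l ∈ A, ∀ m ∈ A,
      condProb ρ A j (z + Pi.single l 1) = condProb ρ A j (z + Pi.single m 1) := by
    intro j hj z hz l hl m hm
    rw [condProb_add_single hbal' hpos' hz hj hl, condProb_add_single hbal' hpos' hz hj hm]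
  have hmem : ∀ c : Fin n → ℕ, ∑ i, c i = k + 2 - 1 → (∀ i, i ∉ A → c i = 0) →
      c ∈ tuplesOn A (k + 1) :=
    fun c hc hcA => ⟨by omega, Function.support_subset_iff'.2 hcA⟩
  refine ⟨fun j hj c hc hcA l hl m hm hcl _ _ => ?_, fun j hj c c' hc hcA hc' hc'A => ?_⟩
  · rw [fun_sub_ite_add_ite_eq]
    conv_lhs => rw [← sub_single_add_single hcl]
    exact hmove j hj _ (sub_single_mem_tuplesOn (hmem c hc hcA) hcl) l hl m hm
  · exact apply_eq_of_add_single_eq _ (hmove j hj) (hmem c hc hcA) (hmem c' hc' hc'A)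

/-- Equations (28)/(29): the main inductive step of the proof of Lemma 4.3.
`c + e_j` and `c - e_l + e_m` are coordinate-wise in ℕ. -/
theorem conditional_probability_independent
    (n d : ℕ) (hn : 1 ≤ n) (hd : 2 ≤ d)
    (ρ : (Fin n → ℕ) → ℝ)
    (hρnonneg : ∀ c, 0 ≤ ρ c)
    (hρsum : ∑ c ∈ Finset.Nat.antidiagonalTuple n d, ρ c = 1)
    (A : Set (Fin n))
    (hA : ∀ j, j ∈ A ↔ ∃ c : Fin n → ℕ, ∑ i, c i = d ∧ 0 < ρ c ∧ 0 < c j)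
    -- hypothesis (i) of Lemma 4.3
    (hpos : ∀ c : Fin n → ℕ, ∑ i, c i = d → (∀ j, j ∉ A → c j = 0) → 0 < ρ c)
    -- hypothesis (ii) of Lemma 4.3: detailed balance (equation (25))
    (hbal : ∀ c : Fin n → ℕ, ∑ i, c i = d → 0 < ρ c → ∀ j k : Fin n,
      0 < c j → 0 < c k →
      (((c j : ℝ) + (if j = k then 1 else 0)) / ((c j : ℝ) + 1)) *
        (ρ c / ρ (fun i => c i - (if i = j then 1 else 0) + (if i = k then 1 else 0)))
      = (((c k : ℝ) + 1) / ((c k : ℝ) + (if j = k then 1 else 0))) *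
        (ρ (fun i => c i - (if i = k then 1 else 0) + (if i = j then 1 else 0)) / ρ c))
    -- the conditional probability P(j | c)
    (P : Fin n → (Fin n → ℕ) → ℝ)
    (hP : ∀ (j : Fin n) (c : Fin n → ℕ), P j c =
      (((c j : ℝ) + 1) * ρ (fun i => c i + if i = j then 1 else 0)) /
        ∑ k ∈ Finset.univ.filter (fun k => k ∈ A),
          (((c k : ℝ) + 1) * ρ (fun i => c i + if i = k then 1 else 0))) :
    (∀ j ∈ A, ∀ c : Fin n → ℕ, ∑ i, c i = d - 1 → (∀ i, i ∉ A → c i = 0) →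
      ∀ l ∈ A, ∀ m ∈ A, 1 ≤ c l → m ≠ j → m ≠ l →
        P j c = P j (fun i => c i - (if i = l then 1 else 0) + (if i = m then 1 else 0))) ∧
    (∀ j ∈ A, ∀ c c' : Fin n → ℕ,
      ∑ i, c i = d - 1 → (∀ i, i ∉ A → c i = 0) →
      ∑ i, c' i = d - 1 → (∀ i, i ∉ A → c' i = 0) →
        P j c = P j c') :=
  conditional_probability_independent_general n d hd ρ A hpos hbal P hP
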